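/- Let p be a real number, and define the polynomials G_n(p) ∈ ℝ[t] by G_0(p) = 1 and G_n(p) = (p/n) Σ_{k=1}^{n} (−1)^{k+1} B_k · G_{n−k}(p) for n ≥ 1, where B_k ∈ ℝ[t] is the k-th Bernoulli polynomial. Write G_{n,k}(p) for the coefficient of t^k in G_n(p). Then for all n ≥ 0 and 0 ≤ k ≤ n, G_{n,k}(p) = C(p−n+k, k) · G_{n−k,0}(p), where C(x,k) is the generalized binomial coefficient. -/

import Mathlib

open Finset Polynomial

/-!
The recursion forces `G_{n+1}' = (p - n) G_n`: differentiating `(n+1) G_{n+1} = p S_{n+1}`, where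
`S_n = ∑_{k=1}^n (-1)^{k+1} B_k G_{n-k}`, and using `B_{k+1}' = (k+1) B_k` together with the same
identity for smaller indices gives `S_{n+1}' = G_n + (p - n - 1) S_n`, and `n G_n = p S_n` finishes.
Reading off coefficients, `(k+1) G_{m+k+1,k+1} = (p - m - k) G_{m+k,k}`, which telescopes to
`G_{m+k,k} = C(p - m, k) G_{m,0}`.
-/

/-- The `k`-th Bernoulli polynomial as a real polynomial
(generating function `u e^{tu}/(e^u - 1)`, so `bernR 1 = X - 1/2`). -/
noncomputable def bernR (k : ℕ) : Polynomial ℝ :=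
  (Polynomial.bernoulli k).map (algebraMap ℚ ℝ)

/-- The generalized binomial coefficient `C(x, k) = x(x-1)⋯(x-k+1)/k!`. -/
noncomputable def genBinom (x : ℝ) (k : ℕ) : ℝ :=
  (∏ i ∈ Finset.range k, (x - (i : ℝ))) / (Nat.factorial k : ℝ)

lemma bernR_zero : bernR 0 = 1 := by simp [bernR]

lemma derivative_bernR_succ (k : ℕ) : derivative (bernR (k + 1)) = C ((k : ℝ) + 1) * bernR k := by
  simp [bernR, derivative_map, Polynomial.derivative_bernoulli_add_one]

lemma genBinom_succ (x : ℝ) (k : ℕ) :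
    genBinom x (k + 1) = genBinom x k * (x - k) / (k + 1) := by
  simp only [genBinom, prod_range_succ, Nat.factorial_succ]
  push_cast
  field_simp

/-- The sum `∑_{k=1}^n (-1)^{k+1} B_k G_{n-k}` of the recursion, reindexed by `j = k - 1`. -/
noncomputable def bernConv (G : ℕ → ℝ[X]) (n : ℕ) : ℝ[X] :=
  ∑ j ∈ range n, (-1) ^ j * bernR (j + 1) * G (n - 1 - j)

section

variable (G : ℕ → ℝ[X])

lemma sum_Icc_eq_bernConv (n : ℕ) :
    ∑ k ∈ Icc 1 n, (-1 : ℝ[X]) ^ (k + 1) * bernR k * G (n - k) = bernConv G n := by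
  rw [← Ico_add_one_right_eq_Icc, sum_Ico_eq_sum_range, bernConv]
  refine sum_congr rfl fun j _ => ?_
  rw [add_comm 1 j, pow_succ, pow_succ, Nat.sub_sub, add_comm 1 j]
  ring

lemma bernConv_succ (n : ℕ) :
    bernConv G (n + 1) = ∑ j ∈ range (n + 1), (-1) ^ j * bernR (j + 1) * G (n - j) := by
  simp [bernConv]

lemma derivative_bernConv_succ {p : ℝ} {n : ℕ} (hG0 : derivative (G 0) = 0)
    (ih : ∀ m < n, derivative (G (m + 1)) = C (p - m) * G m) :
    derivative (bernConv G (n + 1)) = G n + C (p - n - 1) * bernConv G n := by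
  have hterm : ∀ j ∈ range (n + 1),
      derivative ((-1 : ℝ[X]) ^ j * bernR (j + 1) * G (n - j)) =
        (-1) ^ j * C ((j : ℝ) + 1) * bernR j * G (n - j) +
          (-1) ^ j * bernR (j + 1) * derivative (G (n - j)) := by
    intro j _
    simp only [derivative_mul, derivative_bernR_succ, derivative_pow, derivative_neg,
      derivative_one, neg_zero, mul_zero, zero_mul, zero_add]
    ring
  rw [bernConv_succ, derivative_sum, sum_congr rfl hterm, sum_add_distrib, sum_range_succ',
    sum_range_succ, Nat.sub_self, hG0, bernConv, mul_sum]
  simp only [pow_zero, Nat.cast_zero, zero_add, C_1, bernR_zero, Nat.sub_zero, mul_one, one_mul,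
    mul_zero, add_zero]
  rw [add_right_comm, ← sum_add_distrib, add_comm]
  congr 1
  refine sum_congr rfl fun j hj => ?_
  have hjn : j < n := mem_range.mp hj
  have hidx : n - j = n - 1 - j + 1 := by omega
  rw [Nat.sub_add_eq n j 1, Nat.sub_right_comm, hidx, ih _ (by omega), Nat.cast_sub (by omega)]
  simp only [Nat.cast_sub (show 1 ≤ n by omega), C_sub, C_add, C_1, Nat.cast_one, Nat.cast_add,
    pow_succ]
  ring

end

lemma derivative_succ_eq_of_rec (p : ℝ) (G : ℕ → ℝ[X]) (hG0 : derivative (G 0) = 0)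
    (hG : ∀ n : ℕ, 1 ≤ n → G n = C (p / n) * bernConv G n) (n : ℕ) :
    derivative (G (n + 1)) = C (p - n) * G n := by
  have hrec : ∀ n : ℕ, C (n : ℝ) * G n = C p * bernConv G n := by
    intro n
    rcases Nat.eq_zero_or_pos n with rfl | hn
    · simp [bernConv]
    · rw [hG n hn, ← mul_assoc, ← C_mul, mul_div_cancel₀ _ (by positivity)]
  induction n using Nat.strong_induction_on with
  | _ n ih =>
    have hn1 : (C ((n : ℝ) + 1) : ℝ[X]) ≠ 0 := by rw [Ne, C_eq_zero]; positivity
    refine mul_left_cancel₀ hn1 ?_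
    calc C ((n : ℝ) + 1) * derivative (G (n + 1))
        = derivative (C p * bernConv G (n + 1)) := by
          rw [← hrec, derivative_C_mul]; push_cast; rfl
      _ = C p * G n + C (p - n - 1) * (C p * bernConv G n) := by
          rw [derivative_C_mul, derivative_bernConv_succ G hG0 ih]; ring
      _ = C ((n : ℝ) + 1) * (C (p - n) * G n) := by
          rw [← hrec]; simp only [C_sub, C_add, C_1]; ring

lemma coeff_eq_genBinom_mul_coeff_zero (p : ℝ) (G : ℕ → ℝ[X])
    (hG : ∀ n : ℕ, derivative (G (n + 1)) = C (p - n) * G n) (m k : ℕ) :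
    (G (m + k)).coeff k = genBinom (p - m) k * (G m).coeff 0 := by
  induction k with
  | zero => simp [genBinom]
  | succ k ih =>
    have hcoeff : (G (m + k + 1)).coeff (k + 1) * (k + 1) = (p - (m + k)) * (G (m + k)).coeff k := by
      rw [← coeff_derivative, hG, coeff_C_mul]; push_cast; rfl
    rw [ih] at hcoeff
    rw [← add_assoc, genBinom_succ, div_mul_eq_mul_div, eq_div_iff (by positivity)]
    linear_combination hcoeff

/-- the coefficient identity
`G_{n,k}(p) = C(p-n+k, k) G_{n-k,0}(p)`. -/
theorem G_coeff_identity
    (p : ℝ)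
    (G : ℕ → Polynomial ℝ) (hG0 : G 0 = 1)
    (hG : ∀ n : ℕ, 1 ≤ n →
      G n = Polynomial.C (p / (n : ℝ)) *
        ∑ k ∈ Finset.Icc 1 n, (-1 : Polynomial ℝ) ^ (k + 1) * bernR k * G (n - k)) :
    ∀ n k : ℕ, k ≤ n →
      (G n).coeff k = genBinom (p - (n : ℝ) + (k : ℝ)) k * (G (n - k)).coeff 0 := by
  have hderiv := derivative_succ_eq_of_rec p G (by rw [hG0, derivative_one])
    (by simpa only [sum_Icc_eq_bernConv] using hG)
  intro n k hkn
  obtain ⟨m, rfl⟩ := Nat.exists_eq_add_of_le' hkn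
  rw [Nat.add_sub_cancel, coeff_eq_genBinom_mul_coeff_zero p G hderiv]
  push_cast
  ring_nf
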